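/- Sufficient synchronization is an invariant of topological conjugacy: if X and X̃ are topologically conjugate subshifts and X is sufficiently synchronizing, then X̃ is sufficiently synchronizing. -/

import Mathlib

/-- The shift on `Σ^ℤ`: `(x_i)_{i∈ℤ} ↦ (x_{i+1})_{i∈ℤ}`. -/
def shift {A : Type*} (x : ℤ → A) : ℤ → A := fun i => x (i + 1)

/-- The word `x_{[a,b]}` carried by the block of `x` on the interval `[a, b]`. -/
def block {A : Type*} (x : ℤ → A) (a b : ℤ) : List A :=
  (List.range (b + 1 - a).toNat).map fun k => x (a + k)

/-- A word is admissible for `X` if it appears in a point of `X`. -/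
def Admissible {A : Type*} (X : Set (ℤ → A)) (w : List A) : Prop :=
  ∃ x ∈ X, ∃ n : ℤ, ∀ (k : ℕ) (h : k < w.length), x (n + k) = w.get ⟨k, h⟩

/-- A word `v` is synchronizing for `X` if it is admissible and whenever `uv` and `vw`
are admissible, so is `uvw`. -/
def IsSyncWord {A : Type*} (X : Set (ℤ → A)) (v : List A) : Prop :=
  Admissible X v ∧ ∀ u w : List A, Admissible X (u ++ v) → Admissible X (v ++ w) →
    Admissible X (u ++ v ++ w)

/-- A subshift: a nonempty, closed, shift-invariant subset of `Σ^ℤ`. -/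
def IsSubshift {A : Type*} [TopologicalSpace A] (X : Set (ℤ → A)) : Prop :=
  X.Nonempty ∧ IsClosed X ∧ shift '' X = X

/-- Topological transitivity of a subshift, expressed on its language: any two admissible
words can be joined by an admissible transition word. -/
def LangTransitive {A : Type*} (X : Set (ℤ → A)) : Prop :=
  ∀ u v : List A, Admissible X u → Admissible X v → ∃ w, Admissible X (u ++ w ++ v)

/-- A synchronizing subshift: topologically transitive with a synchronizing word. -/
def SyncSubshift {A : Type*} (X : Set (ℤ → A)) : Prop :=
  LangTransitive X ∧ ∃ v : List A, IsSyncWord X v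

/-- A strongly synchronizing subshift: synchronizing symbols appear uniformly close
(within distance `Q`) to synchronizing words. -/
def StronglySync {A : Type*} (X : Set (ℤ → A)) : Prop :=
  SyncSubshift X ∧ ∃ Q : ℕ, ∀ x ∈ X, ∀ I₁ I₂ : ℤ, I₁ ≤ I₂ →
    IsSyncWord X (block x I₁ I₂) →
    ∃ i : ℤ, I₁ - Q ≤ i ∧ i ≤ I₂ + Q ∧ IsSyncWord X [x i]

/-- The higher block system `X^{⟨[a,b]⟩}` of `X`, over the alphabet of words. -/
def higherBlock {A : Type*} (X : Set (ℤ → A)) (a b : ℤ) : Set (ℤ → List A) :=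
  { y | ∃ x ∈ X, ∀ i : ℤ, y i = block x (i + a) (i + b) }

/-- A sufficiently synchronizing subshift: one having a strongly synchronizing
higher block system. -/
def SufficientlySync {A : Type*} (X : Set (ℤ → A)) : Prop :=
  ∃ a b : ℤ, a ≤ b ∧ StronglySync (higherBlock X a b)


/-!
Continuous shift-commuting maps between subshifts over finite alphabets are sliding block codes
(Curtis–Hedlund–Lyndon), so a conjugacy and its inverse both have some finite memory `M`. Such
a conjugacy carries a synchronizing word, widened by `M` on each side, to a synchronizing word:
realize the two given extensions of the image word, pull them back, glue them along the original
synchronizing word and push the glued point forward.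

Compose `X^{⟨[a,b]⟩} → X → X̃` into one such conjugacy and let `R = 2M`. A synchronizing word of
`X̃^{⟨[-R,R]⟩}` is a synchronizing word of `X̃`, which pulls back to one of `X^{⟨[a,b]⟩}`; a
synchronizing symbol lies nearby, and its `M`-neighbourhood maps to a synchronizing word of `X̃`
of length `2R + 1`, that is, to a synchronizing symbol of `X̃^{⟨[-R,R]⟩}`.
-/

open Set

section Words

variable {A : Type*}

def shiftBy (m : ℤ) (x : ℤ → A) : ℤ → A := fun i => x (i + m)

theorem shiftBy_zero (x : ℤ → A) : shiftBy 0 x = x :=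
  funext fun i => congrArg x (add_zero i)

theorem shift_shiftBy (m : ℤ) (x : ℤ → A) : shift (shiftBy m x) = shiftBy (m + 1) x :=
  funext fun i => congrArg x (by ring)

theorem shift_injective : Function.Injective (shift : (ℤ → A) → ℤ → A) := fun x y h =>
  funext fun i => by simpa [shift] using congrFun h (i - 1)

theorem shiftBy_mem {X : Set (ℤ → A)} (hX : shift '' X = X) {x : ℤ → A} (hx : x ∈ X) (m : ℤ) :
    shiftBy m x ∈ X := by
  induction m using Int.induction_on with
  | zero => rwa [shiftBy_zero]
  | succ k ih => rw [← shift_shiftBy, ← hX]; exact mem_image_of_mem _ ih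
  | pred k ih =>
    obtain ⟨y, hy, hxy⟩ : shiftBy (-k) x ∈ shift '' X := by rwa [hX]
    rwa [shift_injective (hxy.trans (by rw [shift_shiftBy, sub_add_cancel]))] at hy

theorem shiftBy_comm_of_shift_comm {B : Type*} {X : Set (ℤ → A)} (hX : shift '' X = X)
    {F : (ℤ → A) → ℤ → B} (hF : ∀ x ∈ X, F (shift x) = shift (F x)) {x : ℤ → A} (hx : x ∈ X)
    (m : ℤ) : F (shiftBy m x) = shiftBy m (F x) := by
  induction m using Int.induction_on with
  | zero => rw [shiftBy_zero, shiftBy_zero]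
  | succ k ih => rw [← shift_shiftBy, hF _ (shiftBy_mem hX hx k), ih, shift_shiftBy]
  | pred k ih =>
    apply shift_injective
    rw [← hF _ (shiftBy_mem hX hx _), shift_shiftBy, shift_shiftBy, sub_add_cancel, ih]

theorem block_eq_map (x : ℤ → A) (a b : ℤ) :
    block x a b = (List.range (b + 1 - a).toNat).map fun k : ℕ => x (a + k) := by
  simp [block, ← List.map_eq_flatMap]

theorem length_block (x : ℤ → A) (a b : ℤ) : (block x a b).length = (b + 1 - a).toNat := by
  simp [block_eq_map]

theorem getElem_block (x : ℤ → A) (a b : ℤ) (k : ℕ) (hk : k < (block x a b).length) :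
    (block x a b)[k] = x (a + k) := by
  simp [block_eq_map]

theorem block_eq_block_iff {x y : ℤ → A} {a b : ℤ} :
    block x a b = block y a b ↔ EqOn x y (Icc a b) := by
  simp only [block_eq_map, List.map_inj_left, List.mem_range]
  refine ⟨fun h i ⟨hai, hib⟩ => ?_, fun h k hk => h ⟨by omega, by omega⟩⟩
  have := h (i - a).toNat (by omega)
  rwa [show a + ((i - a).toNat : ℤ) = i by omega] at this

theorem block_append_block (x : ℤ → A) {a m m' b : ℤ} (hm : m + 1 = m') (ham : a ≤ m')
    (hmb : m ≤ b) : block x a m ++ block x m' b = block x a b := by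
  obtain ⟨k, rfl⟩ : ∃ k : ℕ, m' = a + k := ⟨(m' - a).toNat, by omega⟩
  simp only [block_eq_map]
  rw [show (b + 1 - a).toNat = k + (b + 1 - (a + k)).toNat by omega, List.range_add,
    List.map_append, List.map_map, show (m + 1 - a).toNat = k by omega]
  congr 2
  funext j
  simp [add_assoc]

theorem block_eq_append {x : ℤ → A} {a m m' b : ℤ} {u v : List A} (h : block x a b = u ++ v)
    (hu : a + u.length = m') (hm : m + 1 = m') (hmb : m ≤ b) :
    block x a m = u ∧ block x m' b = v := by
  refine List.append_inj ((block_append_block x hm (by omega) hmb).trans h) ?_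
  rw [length_block]; omega

theorem block_shiftBy (x : ℤ → A) (m a b : ℤ) :
    block (shiftBy m x) a b = block x (a + m) (b + m) := by
  simp only [block_eq_map, shiftBy, show b + m + 1 - (a + m) = b + 1 - a by ring]
  congr 1; funext k; congr 1; ring

theorem block_singleton (x : ℤ → A) (i : ℤ) : block x i i = [x i] := by
  simp [block_eq_map]

theorem admissible_block {X : Set (ℤ → A)} {x : ℤ → A} (hx : x ∈ X) (a b : ℤ) :
    Admissible X (block x a b) :=
  ⟨x, hx, a, fun k hk => by simp [block_eq_map]⟩

theorem Admissible.exists_block_eq {X : Set (ℤ → A)} (hX : shift '' X = X) {w : List A}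
    (hw : Admissible X w) {a b : ℤ} (hab : a + w.length = b + 1) :
    ∃ x ∈ X, block x a b = w := by
  obtain ⟨x, hx, n, hn⟩ := hw
  refine ⟨shiftBy (n - a) x, shiftBy_mem hX hx _, List.ext_getElem ?_ fun k hk _ => ?_⟩
  · rw [length_block]; omega
  · simp only [block_eq_map, List.getElem_map, List.getElem_range, shiftBy]
    rw [show a + k + (n - a) = n + k by ring]
    exact hn k _

theorem Admissible.exists_block_eq_append {X : Set (ℤ → A)} (hX : shift '' X = X)
    {u v : List A} (h : Admissible X (u ++ v)) {a m m' b : ℤ} (hu : a + u.length = m')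
    (hm : m + 1 = m') (hv : m' + v.length = b + 1) :
    ∃ x ∈ X, block x a m = u ∧ block x m' b = v := by
  obtain ⟨x, hx, hxuv⟩ := h.exists_block_eq hX (a := a) (b := b) (by simp; omega)
  exact ⟨x, hx, block_eq_append hxuv hu hm (by omega)⟩

end Words

section Sync

variable {A B C : Type*}

def HasMemory (Φ : (ℤ → C) → ℤ → B) (Y : Set (ℤ → C)) (M : ℕ) : Prop :=
  ∀ η ∈ Y, ∀ η' ∈ Y, ∀ i : ℤ, EqOn η η' (Icc (i - M) (i + M)) → Φ η i = Φ η' i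

theorem HasMemory.mono {Φ : (ℤ → C) → ℤ → B} {Y : Set (ℤ → C)} {M N : ℕ} (h : HasMemory Φ Y M)
    (hMN : M ≤ N) : HasMemory Φ Y N := fun η hη η' hη' i he =>
  h η hη η' hη' i (he.mono (Icc_subset_Icc (by omega) (by omega)))

theorem HasMemory.eqOn {Φ : (ℤ → C) → ℤ → B} {Y : Set (ℤ → C)} {M : ℕ} (h : HasMemory Φ Y M)
    {η η' : ℤ → C} (hη : η ∈ Y) (hη' : η' ∈ Y) {a b : ℤ} (he : EqOn η η' (Icc a b)) :
    EqOn (Φ η) (Φ η') (Icc (a + M) (b - M)) := fun i ⟨hai, hib⟩ =>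
  h η hη η' hη' i (he.mono (Icc_subset_Icc (by omega) (by omega)))

theorem HasMemory.comp {Φ : (ℤ → C) → ℤ → B} {Φ' : (ℤ → B) → ℤ → A} {Y : Set (ℤ → C)}
    {Z : Set (ℤ → B)} {M M' : ℕ} (h' : HasMemory Φ' Z M') (h : HasMemory Φ Y M)
    (hΦ : MapsTo Φ Y Z) : HasMemory (Φ' ∘ Φ) Y (M + M') := fun η hη η' hη' i he =>
  h' _ (hΦ hη) _ (hΦ hη') i ((h.eqOn hη hη' he).mono
    (Icc_subset_Icc (by push_cast; omega) (by push_cast; omega)))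

theorem IsSyncWord.exists_glue {Y : Set (ℤ → C)} (hY : shift '' Y = Y) {η : ℤ → C} {J₁ J₂ : ℤ}
    (hv : IsSyncWord Y (block η J₁ J₂)) (hJ : J₁ ≤ J₂ + 1) {x₁ x₂ : ℤ → C} (hx₁ : x₁ ∈ Y)
    (hx₂ : x₂ ∈ Y) (h₁ : EqOn x₁ η (Icc J₁ J₂)) (h₂ : EqOn x₂ η (Icc J₁ J₂)) {L R : ℤ}
    (hL : L ≤ J₁) (hR : J₂ ≤ R) :
    ∃ x ∈ Y, EqOn x x₁ (Icc L J₂) ∧ EqOn x x₂ (Icc J₁ R) := by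
  rw [← block_eq_block_iff] at h₁ h₂
  have hu : Admissible Y (block x₁ L (J₁ - 1) ++ block η J₁ J₂) := by
    rw [← h₁, block_append_block x₁ (sub_add_cancel _ _) hL (by omega)]
    exact admissible_block hx₁ _ _
  have hw : Admissible Y (block η J₁ J₂ ++ block x₂ (J₂ + 1) R) := by
    rw [← h₂, block_append_block x₂ rfl hJ hR]
    exact admissible_block hx₂ _ _
  obtain ⟨x, hx, hxuv, hxw⟩ := (hv.2 _ _ hu hw).exists_block_eq_append hY (a := L) (m := J₂)
    (b := R) (by simp [length_block]; omega) rfl (by simp [length_block]; omega)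
  obtain ⟨hxu, hxv⟩ := block_eq_append hxuv (m := J₁ - 1) (by simp [length_block]; omega)
    (sub_add_cancel _ _) (by omega)
  refine ⟨x, hx, ?_, ?_⟩ <;> rw [← block_eq_block_iff]
  · rw [← block_append_block x (sub_add_cancel _ _) hL (by omega),
      ← block_append_block x₁ (sub_add_cancel _ _) hL (by omega), hxu, hxv, h₁]
  · rw [← block_append_block x rfl hJ hR, ← block_append_block x₂ rfl hJ hR, hxv, hxw, h₂]

theorem IsSyncWord.map {Y : Set (ℤ → C)} {Z : Set (ℤ → B)} (hY : shift '' Y = Y)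
    (hZ : shift '' Z = Z) {Φ : (ℤ → C) → ℤ → B} {Ψ : (ℤ → B) → ℤ → C} (hΦ : MapsTo Φ Y Z)
    (hΨ : MapsTo Ψ Z Y) (hΦΨ : RightInvOn Ψ Φ Z) {M : ℕ} (hM : HasMemory Φ Y M) {η : ℤ → C}
    (hη : η ∈ Y) {J₁ J₂ K₁ K₂ : ℤ} (hK : K₁ ≤ K₂ + 1) (hJ : J₁ + M ≤ J₂ + 1 - M)
    (hK₁ : K₁ ≤ J₂ + 1 - M) (hK₂ : J₁ + M ≤ K₂ + 1)
    (hback : ∀ ζ ∈ Z, EqOn ζ (Φ η) (Icc K₁ K₂) → EqOn (Ψ ζ) η (Icc J₁ J₂))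
    (hv : IsSyncWord Y (block η J₁ J₂)) : IsSyncWord Z (block (Φ η) K₁ K₂) := by
  refine ⟨admissible_block (hΦ hη) _ _, fun u u' hu hu' => ?_⟩
  have hw : K₁ + (block (Φ η) K₁ K₂).length = K₂ + 1 := by rw [length_block]; omega
  obtain ⟨ζ₁, hζ₁, hζ₁u, hζ₁w⟩ := hu.exists_block_eq_append hZ (a := K₁ - u.length)
    (m := K₁ - 1) (by ring) (sub_add_cancel _ _) hw
  obtain ⟨ζ₂, hζ₂, hζ₂w, hζ₂u⟩ := hu'.exists_block_eq_append hZ (m := K₂)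
    (b := K₂ + u'.length) hw rfl (by ring)
  rw [block_eq_block_iff] at hζ₁w hζ₂w
  obtain ⟨η₃, hη₃, h₁, h₂⟩ := hv.exists_glue hY (by omega) (hΨ hζ₁) (hΨ hζ₂)
    (hback ζ₁ hζ₁ hζ₁w) (hback ζ₂ hζ₂ hζ₂w) (L := min (K₁ - u.length - M) J₁)
    (R := max (K₂ + u'.length + M) J₂) (min_le_right _ _) (le_max_right _ _)
  -- `Φ η₃` follows `ζ₁` up to `J₂ - M` and `ζ₂` from `J₁ + M` on; these ranges overlap
  replace h₁ := hΦΨ hζ₁ ▸ hM.eqOn hη₃ (hΨ hζ₁) h₁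
  replace h₂ := hΦΨ hζ₂ ▸ hM.eqOn hη₃ (hΨ hζ₂) h₂
  have e₁ : block (Φ η₃) (K₁ - u.length) (K₁ - 1) = u :=
    (block_eq_block_iff.mpr (h₁.mono (Icc_subset_Icc (by omega) (by omega)))).trans hζ₁u
  have e₂ : block (Φ η₃) K₁ K₂ = block (Φ η) K₁ K₂ := by
    refine block_eq_block_iff.mpr fun i hi => ?_
    rcases le_or_gt i (J₂ - M) with hi' | hi'
    · exact (h₁ ⟨by grind, hi'⟩).trans (hζ₁w hi)
    · exact (h₂ ⟨by omega, by grind⟩).trans (hζ₂w hi)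
  have e₃ : block (Φ η₃) (K₂ + 1) (K₂ + u'.length) = u' :=
    (block_eq_block_iff.mpr (h₂.mono (Icc_subset_Icc (by omega) (by omega)))).trans hζ₂u
  rw [← e₁, ← e₂, ← e₃, block_append_block _ (sub_add_cancel _ _) (by omega) (by omega),
    block_append_block _ rfl (by omega) (by omega)]
  exact admissible_block (hΦ hη₃) _ _

theorem IsSyncWord.extend {Y : Set (ℤ → C)} (hY : shift '' Y = Y) {x : ℤ → C} (hx : x ∈ Y)
    {J₁ J₂ K₁ K₂ : ℤ} (hJ : J₁ ≤ J₂ + 1) (hK₁ : K₁ ≤ J₁) (hK₂ : J₂ ≤ K₂)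
    (hv : IsSyncWord Y (block x J₁ J₂)) : IsSyncWord Y (block x K₁ K₂) :=
  hv.map (Φ := id) (Ψ := id) (M := 0) hY hY (mapsTo_id _) (mapsTo_id _) (fun _ _ => rfl)
    (fun _ _ _ _ i h => h ⟨by simp, by simp⟩) hx (by omega) (by omega) (by omega) (by omega)
    fun _ _ h => h.mono (Icc_subset_Icc hK₁ hK₂)

end Sync

structure IsSlidingConj {B C : Type*} (Y : Set (ℤ → C)) (Z : Set (ℤ → B))
    (Φ : (ℤ → C) → ℤ → B) (Ψ : (ℤ → B) → ℤ → C) (M : ℕ) : Prop where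
  mapsTo : MapsTo Φ Y Z
  mapsTo_symm : MapsTo Ψ Z Y
  invOn : InvOn Ψ Φ Y Z
  hasMemory : HasMemory Φ Y M
  hasMemory_symm : HasMemory Ψ Z M
  shiftBy_comm : ∀ η ∈ Y, ∀ m, Φ (shiftBy m η) = shiftBy m (Φ η)
  shiftBy_comm_symm : ∀ ζ ∈ Z, ∀ m, Ψ (shiftBy m ζ) = shiftBy m (Ψ ζ)

namespace IsSlidingConj

variable {A B C : Type*} {X : Set (ℤ → A)} {Y : Set (ℤ → C)} {Z : Set (ℤ → B)}
  {Φ : (ℤ → C) → ℤ → B} {Ψ : (ℤ → B) → ℤ → C} {M : ℕ}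

theorem symm (h : IsSlidingConj Y Z Φ Ψ M) : IsSlidingConj Z Y Ψ Φ M :=
  ⟨h.mapsTo_symm, h.mapsTo, h.invOn.symm, h.hasMemory_symm, h.hasMemory, h.shiftBy_comm_symm,
    h.shiftBy_comm⟩

theorem trans {Φ' : (ℤ → B) → ℤ → A} {Ψ' : (ℤ → A) → ℤ → B} {M' : ℕ}
    (h : IsSlidingConj Y Z Φ Ψ M) (h' : IsSlidingConj Z X Φ' Ψ' M') :
    IsSlidingConj Y X (Φ' ∘ Φ) (Ψ ∘ Ψ') (M + M') where
  mapsTo := h'.mapsTo.comp h.mapsTo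
  mapsTo_symm := h.mapsTo_symm.comp h'.mapsTo_symm
  invOn := h.invOn.comp h'.invOn h.mapsTo h'.mapsTo_symm
  hasMemory := h'.hasMemory.comp h.hasMemory h.mapsTo
  hasMemory_symm := add_comm M M' ▸ h.hasMemory_symm.comp h'.hasMemory_symm h'.mapsTo_symm
  shiftBy_comm η hη m := by
    simp only [Function.comp_apply, h.shiftBy_comm η hη, h'.shiftBy_comm _ (h.mapsTo hη)]
  shiftBy_comm_symm ξ hξ m := by
    simp only [Function.comp_apply, h'.shiftBy_comm_symm ξ hξ,
      h.shiftBy_comm_symm _ (h'.mapsTo_symm hξ)]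

theorem isSyncWord_map (h : IsSlidingConj Y Z Φ Ψ M) (hY : shift '' Y = Y)
    (hZ : shift '' Z = Z) {η : ℤ → C} (hη : η ∈ Y) {J₁ J₂ : ℤ} (hJ : J₁ + M ≤ J₂ + 1 - M)
    (hv : IsSyncWord Y (block η J₁ J₂)) : IsSyncWord Z (block (Φ η) (J₁ - M) (J₂ + M)) :=
  hv.map hY hZ h.mapsTo h.mapsTo_symm h.invOn.2 h.hasMemory hη (by omega) hJ (by omega)
    (by omega) fun ζ hζ he => by
      simpa [h.invOn.1 hη] using h.hasMemory_symm.eqOn hζ (h.mapsTo hη) he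

theorem block_map_eq (h : IsSlidingConj Y Z Φ Ψ M) {η : ℤ → C} {ζ : ℤ → B} (hη : η ∈ Y)
    (hζ : ζ ∈ Z) {a b : ℤ} (he : block η (a - M) (b + M) = block (Ψ ζ) (a - M) (b + M)) :
    block (Φ η) a b = block ζ a b := by
  rw [block_eq_block_iff] at he ⊢
  simpa [h.invOn.2 hζ] using h.hasMemory.eqOn hη (h.mapsTo_symm hζ) he

theorem langTransitive (h : IsSlidingConj Y Z Φ Ψ M) (hY : shift '' Y = Y)
    (hZ : shift '' Z = Z) (hT : LangTransitive Y) : LangTransitive Z := by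
  intro U V hU hV
  obtain ⟨ζ₁, hζ₁, hU₁⟩ := hU.exists_block_eq hZ (a := 0) (b := U.length - 1) (by ring)
  obtain ⟨ζ₂, hζ₂, hV₂⟩ := hV.exists_block_eq hZ (a := 0) (b := V.length - 1) (by ring)
  obtain ⟨t, ht⟩ := hT _ _ (admissible_block (h.mapsTo_symm hζ₁) (0 - M) (U.length - 1 + M))
    (admissible_block (h.mapsTo_symm hζ₂) (0 - M) (V.length - 1 + M))
  -- realize the `Y`-word with its last piece where `Ψ ζ₂` carries it; the first piece then
  -- sits `c` places to the left of where `Ψ ζ₁` carries it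
  set c : ℤ := U.length + 2 * M + t.length
  obtain ⟨η, hη, hut, hv⟩ := ht.exists_block_eq_append hY (a := -M - c) (m := -M - 1)
    (m' := 0 - M) (b := V.length - 1 + M) (by simp [length_block]; omega) (by ring)
    (by simp [length_block]; omega)
  obtain ⟨hu, -⟩ := block_eq_append hut (m := U.length - 1 + M - c) (m' := U.length + M - c)
    (by simp [length_block]; omega) (by ring) (by omega)
  rw [show -M - c = 0 - M + -c by ring, show U.length - 1 + M - c = U.length - 1 + M + -c by ring,
    ← block_shiftBy] at hu
  have hU : block (Φ η) (0 + -c) (U.length - 1 + -c) = U := by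
    have := h.block_map_eq (shiftBy_mem hY hη _) hζ₁ hu
    rwa [h.shiftBy_comm η hη, block_shiftBy, hU₁] at this
  have hV : block (Φ η) 0 (V.length - 1) = V := (h.block_map_eq hη hζ₂ hv).trans hV₂
  refine ⟨block (Φ η) (U.length + -c) (-1), ?_⟩
  have := admissible_block (h.mapsTo hη) (0 + -c) (V.length - 1)
  rwa [← block_append_block _ (m := -1) (m' := 0) (by ring) (by omega) (by omega),
    ← block_append_block _ (m := U.length - 1 + -c) (m' := U.length + -c) (by ring) (by omega)
      (by omega), hU, hV] at this

end IsSlidingConj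

section HigherBlock

variable {A B : Type*}

def higherBlockMap (a b : ℤ) (x : ℤ → A) : ℤ → List A := fun i => block x (i + a) (i + b)

/-- For `a ≤ j ≤ b`, this reads `x i` off the word `higherBlockMap a b x (i - j)`. -/
def higherBlockDecode [Inhabited A] (a j : ℤ) (z : ℤ → List A) : ℤ → A :=
  fun i => (z (i - j)).getI (j - a).toNat

theorem higherBlock_eq_image (X : Set (ℤ → A)) (a b : ℤ) :
    higherBlock X a b = higherBlockMap a b '' X := by
  ext z
  simp only [mem_image, funext_iff, higherBlockMap, eq_comm]
  rfl

theorem higherBlockMap_shiftBy (a b m : ℤ) (x : ℤ → A) :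
    higherBlockMap a b (shiftBy m x) = shiftBy m (higherBlockMap a b x) := funext fun i => by
  simp only [higherBlockMap, shiftBy, block_shiftBy]
  congr 1 <;> ring

theorem shift_image_higherBlock {X : Set (ℤ → A)} (hX : shift '' X = X) (a b : ℤ) :
    shift '' higherBlock X a b = higherBlock X a b := by
  have hcomm : ∀ x : ℤ → A, shift (higherBlockMap a b x) = higherBlockMap a b (shift x) := fun x =>
    (higherBlockMap_shiftBy a b 1 x).symm
  rw [higherBlock_eq_image, image_comm hcomm, hX]

theorem higherBlockDecode_higherBlockMap [Inhabited A] {a j b : ℤ} (ha : a ≤ j) (hb : j ≤ b)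
    (x : ℤ → A) : higherBlockDecode a j (higherBlockMap a b x) = x := funext fun i => by
  have hk : (j - a).toNat < (block x (i - j + a) (i - j + b)).length := by
    rw [length_block]; omega
  simp only [higherBlockDecode, higherBlockMap]
  rw [List.getI_eq_getElem _ hk, getElem_block]
  congr 1; omega

theorem higherBlockDecode_shiftBy [Inhabited A] (a j m : ℤ) (z : ℤ → List A) :
    higherBlockDecode a j (shiftBy m z) = shiftBy m (higherBlockDecode a j z) := funext fun i => by
  simp only [higherBlockDecode, shiftBy, sub_add_eq_add_sub]

theorem hasMemory_higherBlockMap (X : Set (ℤ → A)) (a b : ℤ) :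
    HasMemory (higherBlockMap a b) X (max a.natAbs b.natAbs) := fun _ _ _ _ _ h =>
  block_eq_block_iff.mpr (h.mono (Icc_subset_Icc (by omega) (by omega)))

theorem hasMemory_higherBlockDecode [Inhabited A] (Z : Set (ℤ → List A)) (a j : ℤ) :
    HasMemory (higherBlockDecode a j) Z j.natAbs := fun _ _ _ _ _ h => by
  simp only [higherBlockDecode]
  rw [h ⟨by omega, by omega⟩]

theorem isSlidingConj_higherBlockMap [Inhabited A] (X : Set (ℤ → A)) {a j b : ℤ} (ha : a ≤ j)
    (hb : j ≤ b) :
    IsSlidingConj X (higherBlock X a b) (higherBlockMap a b) (higherBlockDecode a j)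
      (max a.natAbs b.natAbs) where
  mapsTo x hx := higherBlock_eq_image X a b ▸ mem_image_of_mem _ hx
  mapsTo_symm := by
    rw [higherBlock_eq_image]
    rintro _ ⟨x, hx, rfl⟩
    rwa [higherBlockDecode_higherBlockMap ha hb]
  invOn := by
    refine ⟨fun x _ => higherBlockDecode_higherBlockMap ha hb x, ?_⟩
    rw [higherBlock_eq_image]
    rintro _ ⟨x, -, rfl⟩
    rw [higherBlockDecode_higherBlockMap ha hb]
  hasMemory := hasMemory_higherBlockMap X a b
  hasMemory_symm := (hasMemory_higherBlockDecode _ a j).mono (by omega)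
  shiftBy_comm _ _ m := higherBlockMap_shiftBy a b m _
  shiftBy_comm_symm _ _ m := higherBlockDecode_shiftBy a j m _

theorem eqOn_of_eqOn_higherBlockMap {x y : ℤ → A} {a b p q : ℤ} (hab : a ≤ b) (hpq : p ≤ q)
    (h : EqOn (higherBlockMap a b x) (higherBlockMap a b y) (Icc p q)) :
    EqOn x y (Icc (p + a) (q + b)) := fun i ⟨hi₁, hi₂⟩ =>
  -- the word at `max p (min (i - a) q)` covers position `i`
  block_eq_block_iff.mp (h (x := max p (min (i - a) q)) ⟨by omega, by omega⟩) ⟨by omega, by omega⟩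

theorem IsSyncWord.map_higherBlockMap {Z : Set (ℤ → B)} (hZ : shift '' Z = Z) {R : ℕ} {ζ : ℤ → B}
    (hζ : ζ ∈ Z) {p q : ℤ} (hpq : p ≤ q) (hv : IsSyncWord Z (block ζ (p - R) (q + R))) :
    IsSyncWord (higherBlock Z (-(R : ℤ)) R) (block (higherBlockMap (-(R : ℤ)) R ζ) p q) := by
  have : Inhabited B := ⟨ζ 0⟩
  have h := isSlidingConj_higherBlockMap Z (a := -(R : ℤ)) (j := 0) (b := R) (by omega) (by omega)
  refine hv.map hZ (shift_image_higherBlock hZ _ _) h.mapsTo h.mapsTo_symm h.invOn.2 (M := R)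
    (h.hasMemory.mono (by omega)) hζ (by omega) (by omega) (by omega) (by omega) ?_
  rw [higherBlock_eq_image]
  rintro _ ⟨ζ', -, rfl⟩ he
  rw [higherBlockDecode_higherBlockMap (by omega) (by omega)]
  simpa [← sub_eq_add_neg] using eqOn_of_eqOn_higherBlockMap (by omega) hpq he

theorem IsSyncWord.of_map_higherBlockMap {Z : Set (ℤ → B)} (hZ : shift '' Z = Z) {R : ℕ}
    {ζ : ℤ → B} (hζ : ζ ∈ Z) {p q : ℤ} (hpq : p ≤ q)
    (hv : IsSyncWord (higherBlock Z (-(R : ℤ)) R) (block (higherBlockMap (-(R : ℤ)) R ζ) p q)) :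
    IsSyncWord Z (block ζ (p - R) (q + R)) := by
  have : Inhabited B := ⟨ζ 0⟩
  have h := isSlidingConj_higherBlockMap Z (a := -(R : ℤ)) (j := 0) (b := R) (by omega) (by omega)
  have := hv.map (shift_image_higherBlock hZ _ _) hZ h.mapsTo_symm h.mapsTo h.invOn.1
    (hasMemory_higherBlockDecode _ _ _) (h.mapsTo hζ) (K₁ := p - R) (K₂ := q + R) (by omega)
    (by omega) (by omega) (by omega) fun ζ' hζ' he => by
      rw [higherBlockDecode_higherBlockMap (by omega) (by omega)] at he
      simpa using h.hasMemory.eqOn hζ' hζ he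
  rwa [higherBlockDecode_higherBlockMap (by omega) (by omega)] at this

end HigherBlock

theorem StronglySync.sufficientlySync_of_isSlidingConj {B C : Type*} {Y : Set (ℤ → C)}
    {Z : Set (ℤ → B)} {Φ : (ℤ → C) → ℤ → B} {Ψ : (ℤ → B) → ℤ → C} {M : ℕ}
    (hY : shift '' Y = Y) (hZ : shift '' Z = Z) (h : IsSlidingConj Y Z Φ Ψ M)
    (hs : StronglySync Y) : SufficientlySync Z := by
  obtain ⟨⟨hT, v, hv⟩, Q, hQ⟩ := hs
  obtain ⟨η, hη, hηv⟩ := hv.1.exists_block_eq hY (a := 0) (b := v.length - 1) (by ring)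
  rw [← hηv] at hv
  have : Inhabited B := ⟨Φ η 0⟩
  set R := 2 * M
  have hZR := shift_image_higherBlock hZ (-(R : ℤ)) R
  refine ⟨-(R : ℤ), R, by omega, ⟨?_, ?_⟩, R + M + Q, ?_⟩
  · exact (isSlidingConj_higherBlockMap Z (j := 0) (by omega) (by omega)).langTransitive hZ hZR
      (h.langTransitive hY hZ hT)
  · have hv' := h.isSyncWord_map hY hZ hη (by omega)
      (hv.extend hY hη (K₁ := -M) (K₂ := v.length - 1 + M) (by omega) (by omega) (by omega))
    exact ⟨_, (hv'.extend hZ (h.mapsTo hη) (K₁ := 0 - R) (K₂ := v.length + R) (by omega)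
      (by omega) (by omega)).map_higherBlockMap hZ (h.mapsTo hη) (by omega)⟩
  · intro z hz I₁ I₂ hI hsync
    rw [higherBlock_eq_image] at hz
    obtain ⟨ζ, hζ, rfl⟩ := hz
    have h₁ := hsync.of_map_higherBlockMap hZ hζ hI
    have h₂ := h.symm.isSyncWord_map hZ hY hζ (by omega) h₁
    obtain ⟨i, hi₁, hi₂, hi⟩ := hQ _ (h.mapsTo_symm hζ) _ _ (by omega) h₂
    rw [← block_singleton] at hi
    have h₃ := h.isSyncWord_map hY hZ (h.mapsTo_symm hζ) (by omega)
      (hi.extend hY (h.mapsTo_symm hζ) (K₁ := i - M) (K₂ := i + M) (by omega) (by omega)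
        (by omega))
    rw [h.invOn.2 hζ] at h₃
    refine ⟨i, by omega, by omega, ?_⟩
    rw [← block_singleton]
    exact (h₃.extend hZ hζ (K₁ := i - R) (K₂ := i + R) (by omega) (by omega)
      (by omega)).map_higherBlockMap hZ hζ le_rfl

section SlidingBlockCode

open Topology

variable {A B : Type*} [TopologicalSpace A]

theorem cylinder_mem_nhds [DiscreteTopology A] (x : ℤ → A) (n : ℕ) :
    {y | EqOn y x (Icc (-n) n)} ∈ 𝓝 x :=
  Filter.mem_of_superset
    ((isOpen_set_pi (finite_Icc (-(n : ℤ)) n) fun i _ => isOpen_discrete {x i}).mem_nhds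
      fun _ _ => rfl)
    fun _ hy _ hi => hy _ hi

theorem exists_cylinder_subset {x : ℤ → A} {U : Set (ℤ → A)} (hU : U ∈ 𝓝 x) :
    ∃ n : ℕ, {y | EqOn y x (Icc (-n) n)} ⊆ U := by
  rw [nhds_pi, Filter.mem_pi] at hU
  obtain ⟨I, hI, t, ht, hIt⟩ := hU
  obtain ⟨n, hn⟩ := (hI.image Int.natAbs).bddAbove
  refine ⟨n, fun y hy => hIt fun i hi => ?_⟩
  have := hn (mem_image_of_mem _ hi)
  rw [hy ⟨by omega, by omega⟩]
  exact mem_of_mem_nhds (ht i)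

theorem exists_hasMemory_of_continuousOn [DiscreteTopology A] [TopologicalSpace B]
    [DiscreteTopology B] {X : Set (ℤ → A)} (hXc : IsCompact X) (hX : shift '' X = X)
    {F : (ℤ → A) → ℤ → B} (hFc : ContinuousOn F X)
    (hF : ∀ x ∈ X, ∀ m, F (shiftBy m x) = shiftBy m (F x)) : ∃ N, HasMemory F X N := by
  have hloc : ∀ x ∈ X, ∃ n : ℕ, ∀ y ∈ X, EqOn y x (Icc (-n) n) → F y 0 = F x 0 := by
    intro x hx
    have hU := ((continuous_apply 0).continuousAt.comp_continuousWithinAt (hFc x hx))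
      ((isOpen_discrete {F x 0}).mem_nhds rfl)
    obtain ⟨U, hU, hUX⟩ := mem_nhdsWithin_iff_exists_mem_nhds_inter.mp hU
    obtain ⟨n, hn⟩ := exists_cylinder_subset hU
    exact ⟨n, fun y hy hyx => hUX ⟨hn hyx, hy⟩⟩
  choose! n hn using hloc
  obtain ⟨t, htX, hcover⟩ := hXc.elim_nhds_subcover _ fun x _ => cylinder_mem_nhds x (n x)
  -- a window that contains the windows of a finite cover works at the coordinate `0`
  set N := t.sup n
  have hN : ∀ x ∈ X, ∀ x' ∈ X, EqOn x x' (Icc (-N) N) → F x 0 = F x' 0 := by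
    intro x hx x' hx' he
    obtain ⟨x₀, hx₀t, hxx₀⟩ := mem_iUnion₂.mp (hcover hx)
    have hn₀ : n x₀ ≤ N := Finset.le_sup hx₀t
    have hx'x₀ : EqOn x' x₀ (Icc (-n x₀) (n x₀)) := fun i hi =>
      (he (Icc_subset_Icc (by omega) (by omega) hi)).symm.trans (hxx₀ hi)
    rw [hn x₀ (htX x₀ hx₀t) x hx hxx₀, hn x₀ (htX x₀ hx₀t) x' hx' hx'x₀]
  refine ⟨N, fun x hx x' hx' i he => ?_⟩
  have := hN _ (shiftBy_mem hX hx i) _ (shiftBy_mem hX hx' i) fun j hj =>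
    he ⟨by linarith [hj.1], by linarith [hj.2]⟩
  simpa [hF x hx, hF x' hx', shiftBy] using this

theorem isSlidingConj_of_continuousOn [DiscreteTopology A] [Finite A] [TopologicalSpace B]
    [DiscreteTopology B] [Finite B] {X : Set (ℤ → A)} {Xt : Set (ℤ → B)} (hX : IsSubshift X)
    (hXt : IsSubshift Xt) {F : (ℤ → A) → ℤ → B} {G : (ℤ → B) → ℤ → A} (hF : MapsTo F X Xt)
    (hG : MapsTo G Xt X) (hinv : InvOn G F X Xt)
    (hshift : ∀ x ∈ X, F (shift x) = shift (F x)) (hFc : ContinuousOn F X)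
    (hGc : ContinuousOn G Xt) : ∃ N, IsSlidingConj X Xt F G N := by
  have hFs : ∀ x ∈ X, ∀ m, F (shiftBy m x) = shiftBy m (F x) := fun x hx =>
    shiftBy_comm_of_shift_comm hX.2.2 hshift hx
  have hGs : ∀ y ∈ Xt, ∀ m, G (shiftBy m y) = shiftBy m (G y) := fun y hy m => by
    conv_lhs => rw [← hinv.2 hy, ← hFs _ (hG hy)]
    exact hinv.1 (shiftBy_mem hX.2.2 (hG hy) m)
  obtain ⟨N₁, hN₁⟩ := exists_hasMemory_of_continuousOn hX.2.1.isCompact hX.2.2 hFc hFs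
  obtain ⟨N₂, hN₂⟩ := exists_hasMemory_of_continuousOn hXt.2.1.isCompact hXt.2.2 hGc hGs
  exact ⟨max N₁ N₂, hF, hG, hinv, hN₁.mono (le_max_left _ _), hN₂.mono (le_max_right _ _), hFs,
    hGs⟩

end SlidingBlockCode

/-- Proposition 2.3: sufficient synchronization is an invariant of topological conjugacy. -/
theorem stmt1 {A B : Type*} [Fintype A] [Fintype B]
    [TopologicalSpace A] [DiscreteTopology A] [TopologicalSpace B] [DiscreteTopology B]
    (X : Set (ℤ → A)) (Xt : Set (ℤ → B)) (hX : IsSubshift X) (hXt : IsSubshift Xt)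
    (F : (ℤ → A) → (ℤ → B)) (G : (ℤ → B) → (ℤ → A))
    (hF : ∀ x ∈ X, F x ∈ Xt) (hG : ∀ y ∈ Xt, G y ∈ X)
    (hGF : ∀ x ∈ X, G (F x) = x) (hFG : ∀ y ∈ Xt, F (G y) = y)
    (hshift : ∀ x ∈ X, F (shift x) = shift (F x))
    (hFc : ContinuousOn F X) (hGc : ContinuousOn G Xt)
    (hs : SufficientlySync X) :
    SufficientlySync Xt := by
  obtain ⟨a, b, hab, hs⟩ := hs
  obtain ⟨x₀, -⟩ := hX.1
  have : Inhabited A := ⟨x₀ 0⟩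
  obtain ⟨N, hN⟩ := isSlidingConj_of_continuousOn hX hXt hF hG ⟨hGF, hFG⟩ hshift hFc hGc
  exact hs.sufficientlySync_of_isSlidingConj (shift_image_higherBlock hX.2.2 a b) hXt.2.2
    ((isSlidingConj_higherBlockMap X le_rfl hab).symm.trans hN)
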